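/- Let X ⊆ ℝᴸ be a compact set, Y = {0} ⊆ ℝ^ℓ. Then for all 0 ≤ k, 𝒢̲_k(X × {0}, ℝᴸ × ℝ^ℓ) = 𝒢̲_k(X, ℝᴸ) and 𝒢̄_k(X × {0}, ℝᴸ × ℝ^ℓ) = 𝒢̄_k(X, ℝᴸ); in particular, the Gaussian Minkowski content of a compact set in Euclidean space is unchanged under the standard inclusion ℝᴸ ⊆ ℝ^{L+ℓ}. -/

import Mathlib

open MeasureTheory Filter

variable {α : Type*} [MetricSpace α] [MeasurableSpace α]

/-- Lower Gaussian Minkowski content of codimension `m` of `X ⊆ α` with respect to `μ`. -/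
noncomputable def lowerGaussMink (μ : Measure α) (m : ℕ) (X : Set α) : ENNReal :=
  liminf (fun u : ℝ => ENNReal.ofReal (u ^ m) *
    ∫⁻ x, ENNReal.ofReal (Real.exp (-Real.pi * u ^ 2 * Metric.infDist x X ^ 2)) ∂μ) atTop

/-- Upper Gaussian Minkowski content. -/
noncomputable def upperGaussMink (μ : Measure α) (m : ℕ) (X : Set α) : ENNReal :=
  limsup (fun u : ℝ => ENNReal.ofReal (u ^ m) *
    ∫⁻ x, ENNReal.ofReal (Real.exp (-Real.pi * u ^ 2 * Metric.infDist x X ^ 2)) ∂μ) atTop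

/-- The standard inclusion `ℝᴸ ⊆ ℝ^{L+ℓ}` (append zeros). -/
noncomputable def stdIncl (L l : ℕ) (x : EuclideanSpace ℝ (Fin L)) :
    EuclideanSpace ℝ (Fin (L + l)) :=
  (WithLp.equiv 2 (Fin (L + l) → ℝ)).symm
    (fun i => if h : (i : ℕ) < L then x ⟨i, h⟩ else 0)


/-! For `z = (x, v)` in `ℝᴸ × ℝ^ℓ` one has `d(z, X × {0})² = d(x, X)² + |v|²`, so the Gaussian
weight `exp (-π u² d(z, X × {0})²)` splits as a product of the weight of `x` relative to `X`
and the Gaussian `exp (-π u² |v|²)`. By Fubini the second factor integrates to `u^{-ℓ}`, which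
exactly cancels the extra factor `u^ℓ` in the normalization `u^{L+ℓ-k}`. -/

open Metric

noncomputable def gaussWeight (u t : ℝ) : ENNReal :=
  ENNReal.ofReal (Real.exp (-Real.pi * u ^ 2 * t ^ 2))

/-- `lowerGaussMink μ m X` and `upperGaussMink μ m X` are definitionally the liminf and limsup
of `gaussContentAt μ m X` at `∞`. -/
noncomputable def gaussContentAt {E : Type*} [MetricSpace E] [MeasurableSpace E] (μ : Measure E)
    (m : ℕ) (X : Set E) (u : ℝ) : ENNReal :=
  ENNReal.ofReal (u ^ m) * ∫⁻ x, gaussWeight u (infDist x X) ∂μ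

@[fun_prop]
theorem continuous_gaussWeight (u : ℝ) : Continuous (gaussWeight u) := by
  unfold gaussWeight
  exact ENNReal.continuous_ofReal.comp (by fun_prop)

theorem gaussWeight_sqrt_sq_add_sq (u s t : ℝ) :
    gaussWeight u √(s ^ 2 + t ^ 2) = gaussWeight u s * gaussWeight u t := by
  simp only [gaussWeight]
  rw [Real.sq_sqrt (by positivity), ← ENNReal.ofReal_mul (Real.exp_pos _).le, ← Real.exp_add,
    mul_add]

theorem infDist_image_eq_sqrt {E F : Type*} [PseudoMetricSpace E] [ProperSpace E]
    [PseudoMetricSpace F] {ι : E → F} (hι : Continuous ι) {X : Set E} (hX : X.Nonempty)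
    {x : E} {z : F} {c : ℝ} (h : ∀ y, dist z (ι y) = √(dist x y ^ 2 + c ^ 2)) :
    infDist z (ι '' X) = √(infDist x X ^ 2 + c ^ 2) := by
  apply le_antisymm
  · obtain ⟨y, hy, hxy⟩ := exists_mem_closure_infDist_eq_dist hX x
    calc infDist z (ι '' X) = infDist z (closure (ι '' X)) := infDist_closure.symm
      _ ≤ dist z (ι y) := infDist_le_dist_of_mem (mem_closure_image hι.continuousAt hy)
      _ = _ := by rw [h, hxy]
  · rw [le_infDist (hX.image ι)]
    rintro _ ⟨y, hy, rfl⟩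
    rw [h]
    gcongr
    · exact infDist_nonneg
    · exact infDist_le_dist_of_mem hy

theorem infDist_toLp_prod_zero_image {E F : Type*} [NormedAddCommGroup E] [ProperSpace E]
    [NormedAddCommGroup F] {X : Set E} (hX : X.Nonempty) (x : E) (v : F) :
    infDist (WithLp.toLp 2 (x, v)) ((fun y => WithLp.toLp 2 (y, (0 : F))) '' X) =
      √(infDist x X ^ 2 + ‖v‖ ^ 2) :=
  infDist_image_eq_sqrt (by fun_prop) hX fun y => by simp [WithLp.prod_dist_eq_of_L2]

section InnerProductSpace

variable {E F : Type*}
  [NormedAddCommGroup E] [InnerProductSpace ℝ E] [FiniteDimensional ℝ E]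
  [MeasurableSpace E] [BorelSpace E]
  [NormedAddCommGroup F] [InnerProductSpace ℝ F] [FiniteDimensional ℝ F]
  [MeasurableSpace F] [BorelSpace F]

theorem lintegral_gaussWeight_norm {u : ℝ} (hu : 0 < u) :
    ∫⁻ v : E, gaussWeight u ‖v‖ = ENNReal.ofReal (u⁻¹ ^ Module.finrank ℝ E) := by
  have hb : 0 < Real.pi * u ^ 2 := by positivity
  have hI := GaussianFourier.integral_rexp_neg_mul_sq_norm (V := E) hb
  have hπ : Real.pi / (Real.pi * u ^ 2) = u⁻¹ ^ (2 : ℝ) := by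
    rw [Real.rpow_two]
    field_simp
  rw [hπ, ← Real.rpow_mul (by positivity), mul_div_cancel₀ _ two_ne_zero,
    Real.rpow_natCast] at hI
  simp only [neg_mul] at hI
  simp only [gaussWeight, neg_mul]
  rw [← hI, ← ofReal_integral_eq_lintegral_ofReal
    (.of_integral_ne_zero (by rw [hI]; positivity)) (.of_forall fun _ => (Real.exp_pos _).le)]

theorem lintegral_gaussWeight_infDist_toLp_prod_zero_image {X : Set E} (hX : X.Nonempty)
    {u : ℝ} (hu : 0 < u) :
    ∫⁻ z : WithLp 2 (E × F),
        gaussWeight u (infDist z ((fun y => WithLp.toLp 2 (y, (0 : F))) '' X)) =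
      ENNReal.ofReal (u⁻¹ ^ Module.finrank ℝ F) *
        ∫⁻ x : E, gaussWeight u (infDist x X) := by
  rw [← (WithLp.volume_preserving_toLp E F).lintegral_comp (by fun_prop)]
  simp only [infDist_toLp_prod_zero_image hX, gaussWeight_sqrt_sq_add_sq]
  rw [Measure.volume_eq_prod, lintegral_prod_mul (f := fun x => gaussWeight u (infDist x X))
    (g := fun v : F => gaussWeight u ‖v‖) (by fun_prop) (by fun_prop),
    lintegral_gaussWeight_norm hu, mul_comm]

theorem gaussContentAt_linearIsometryEquiv_image (e : E ≃ₗᵢ[ℝ] F) (m : ℕ) (X : Set E) :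
    gaussContentAt volume m (e '' X) = gaussContentAt volume m X := by
  funext u
  unfold gaussContentAt
  rw [← e.measurePreserving.lintegral_comp_emb e.toHomeomorph.measurableEmbedding]
  simp only [infDist_image e.isometry]

theorem gaussContentAt_toLp_prod_zero_image {X : Set E} (hX : X.Nonempty) (m : ℕ)
    {u : ℝ} (hu : 0 < u) :
    gaussContentAt volume (m + Module.finrank ℝ F)
        ((fun y => WithLp.toLp 2 (y, (0 : F))) '' X) u =
      gaussContentAt volume m X u := by
  unfold gaussContentAt
  rw [lintegral_gaussWeight_infDist_toLp_prod_zero_image hX hu, ← mul_assoc,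
    ← ENNReal.ofReal_mul (by positivity), pow_add, mul_assoc, ← mul_pow,
    mul_inv_cancel₀ hu.ne', one_pow, mul_one]

end InnerProductSpace

noncomputable def EuclideanSpace.appendIsometry (L l : ℕ) :
    WithLp 2 (EuclideanSpace ℝ (Fin L) × EuclideanSpace ℝ (Fin l)) ≃ₗᵢ[ℝ]
      EuclideanSpace ℝ (Fin (L + l)) :=
  (PiLp.sumPiLpEquivProdLpPiLp 2 (fun _ => ℝ)).symm.trans
    (LinearIsometryEquiv.piLpCongrLeft 2 ℝ ℝ finSumFinEquiv)

theorem stdIncl_eq_appendIsometry (L l : ℕ) (x : EuclideanSpace ℝ (Fin L)) :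
    stdIncl L l x = EuclideanSpace.appendIsometry L l (WithLp.toLp 2 (x, 0)) := by
  ext i
  refine Fin.addCases ?_ ?_ i <;> simp [stdIncl, EuclideanSpace.appendIsometry]

theorem stmt_17_general (L l k : ℕ) (X : Set (EuclideanSpace ℝ (Fin L)))
    (hXne : X.Nonempty) (hkL : k ≤ L) :
    lowerGaussMink (volume : Measure (EuclideanSpace ℝ (Fin (L + l)))) (L + l - k)
        (stdIncl L l '' X) =
      lowerGaussMink (volume : Measure (EuclideanSpace ℝ (Fin L))) (L - k) X ∧
    upperGaussMink (volume : Measure (EuclideanSpace ℝ (Fin (L + l)))) (L + l - k)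
        (stdIncl L l '' X) =
      upperGaussMink (volume : Measure (EuclideanSpace ℝ (Fin L))) (L - k) X := by
  have hdim : L + l - k = L - k + Module.finrank ℝ (EuclideanSpace ℝ (Fin l)) := by
    rw [finrank_euclideanSpace_fin]
    omega
  have h : gaussContentAt volume (L + l - k) (stdIncl L l '' X) =ᶠ[atTop]
      gaussContentAt volume (L - k) X := by
    filter_upwards [eventually_gt_atTop 0] with u hu
    rw [funext (stdIncl_eq_appendIsometry L l), ← Set.image_image,
      gaussContentAt_linearIsometryEquiv_image, hdim]
    exact gaussContentAt_toLp_prod_zero_image hXne _ hu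
  exact ⟨liminf_congr h, limsup_congr h⟩

/-- the Gaussian Minkowski content of a compact set in Euclidean space is
unchanged under the standard inclusion `ℝᴸ ⊆ ℝ^{L+ℓ}`: for a compact `X ⊆ ℝᴸ`, both the
lower and upper Gaussian `k`-contents of `X × {0} ⊆ ℝ^{L+ℓ}` (here the image of `X`
under the standard inclusion) equal those of `X` in `ℝᴸ`. -/
theorem stmt_17 (L l k : ℕ) (X : Set (EuclideanSpace ℝ (Fin L)))
    (hX : IsCompact X) (hXne : X.Nonempty) (hkL : k ≤ L) :
    lowerGaussMink (volume : Measure (EuclideanSpace ℝ (Fin (L + l)))) (L + l - k)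
        (stdIncl L l '' X) =
      lowerGaussMink (volume : Measure (EuclideanSpace ℝ (Fin L))) (L - k) X ∧
    upperGaussMink (volume : Measure (EuclideanSpace ℝ (Fin (L + l)))) (L + l - k)
        (stdIncl L l '' X) =
      upperGaussMink (volume : Measure (EuclideanSpace ℝ (Fin L))) (L - k) X :=
  stmt_17_general L l k X hXne hkL
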